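/- Let [a, b] be compact, φ₀, φ₁ integrable on [a, b], and for ε ∈ [0, 1] set φ_ε = φ₀ + ε·(φ₁ − φ₀). Fix β ∈ ℝ and let u : [0,1] × [a,b] → ℝ², (ε, x) ↦ u_ε(x), be continuously differentiable such that for each ε ∈ [0,1], u_ε is a solution of τ_{φ_ε} u_ε = 0 with u_ε(b) = (sin β, cos β). Then for all ε ∈ [0,1] and x ∈ [a,b], W_x(u_ε, ∂_ε u_ε) = ∫_x^b ⟨u_ε(r), (φ₀(r) − φ₁(r)) u_ε(r)⟩ dr. Similarly, if instead u_ε(a) = (sin α, cos α) for a fixed α ∈ ℝ and all ε, then W_x(u_ε, ∂_ε u_ε) = −∫_a^x ⟨u_ε(r), (φ₀(r) − φ₁(r)) u_ε(r)⟩ dr. -/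

import Mathlib

/-!
If `u_δ(c) = u_ε(c)`, the Lagrange identity for the Dirac expression, together with
`φ_δ - φ_ε = (δ - ε)(φ₁ - φ₀)` and the vanishing of `W_c(u_ε, u_δ)`, gives
`W_x(u_ε, u_δ) = (δ - ε) ∫_c^x ⟨u_ε, (φ₁ - φ₀) u_δ⟩`. By dominated convergence the integral is
continuous in `δ`, so differentiating in `δ` at `δ = ε` yields
`W_x(u_ε, ∂_ε u_ε) = ∫_c^x ⟨u_ε, (φ₁ - φ₀) u_ε⟩`; take `c = b`, resp. `c = a`.
-/

open MeasureTheory Real Set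

/-- The real matrix representing `(1/i)·σ₂`. -/
noncomputable def Jmat : Matrix (Fin 2) (Fin 2) ℝ := !![0, -1; 1, 0]

/-- The Wronskian `W_x(u,v) = u₁(x) v₂(x) − u₂(x) v₁(x)`. -/
noncomputable def Wr (u v : ℝ → Fin 2 → ℝ) (x : ℝ) : ℝ :=
  u x 0 * v x 1 - u x 1 * v x 0

/-- The Euclidean inner product on `ℝ²`. -/
noncomputable def ip (a b : Fin 2 → ℝ) : ℝ := a 0 * b 0 + a 1 * b 1

/-- `u` is locally absolutely continuous on `I` with a.e. derivative `u'`. -/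
def IsACDeriv (I : Set ℝ) (u u' : ℝ → Fin 2 → ℝ) : Prop :=
  ContinuousOn u I ∧
  ∀ c ∈ I, ∀ x ∈ I, ∀ i : Fin 2,
    IntervalIntegrable (fun t => u' t i) volume c x ∧
    u x i = u c i + ∫ t in c..x, u' t i

/-- `u` is a solution of the Dirac equation `τ_φ u = λ u` on `I`. -/
def IsDiracSolution (I : Set ℝ) (φ : ℝ → Matrix (Fin 2) (Fin 2) ℝ) (lam : ℝ)
    (u : ℝ → Fin 2 → ℝ) : Prop :=
  ∃ u' : ℝ → Fin 2 → ℝ, IsACDeriv I u u' ∧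
    ∀ᵐ x ∂volume, x ∈ I → Jmat.mulVec (u' x) + (φ x).mulVec (u x) = lam • u x

open Matrix

theorem mul_sub_mul_eq_intervalIntegral {f g F G : ℝ → ℝ} {c d : ℝ}
    (hf : IntervalIntegrable f volume c d) (hg : IntervalIntegrable g volume c d)
    (hF : ∀ t ∈ uIcc c d, F t = F c + ∫ s in c..t, f s)
    (hG : ∀ t ∈ uIcc c d, G t = G c + ∫ s in c..t, g s) :
    F d * G d - F c * G c = ∫ t in c..d, f t * G t + F t * g t := by
  have hP : AbsolutelyContinuousOnInterval (fun t => F c + ∫ s in c..t, f s) c d :=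
    contDiffOn_const.absolutelyContinuousOnInterval.fun_add
      (hf.absolutelyContinuousOnInterval_intervalIntegral left_mem_uIcc)
  have hQ : AbsolutelyContinuousOnInterval (fun t => G c + ∫ s in c..t, g s) c d :=
    contDiffOn_const.absolutelyContinuousOnInterval.fun_add
      (hg.absolutelyContinuousOnInterval_intervalIntegral left_mem_uIcc)
  have h := hP.integral_deriv_mul_eq_sub hQ
  simp only [intervalIntegral.integral_same, add_zero] at h
  rw [hF d right_mem_uIcc, hG d right_mem_uIcc, ← h]
  refine intervalIntegral.integral_congr_ae ?_
  filter_upwards [hf.ae_hasDerivAt_integral, hg.ae_hasDerivAt_integral] with t hft hgt ht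
  have ht' := uIoc_subset_uIcc ht
  rw [((hft ht' c left_mem_uIcc).const_add (F c)).deriv,
    ((hgt ht' c left_mem_uIcc).const_add (G c)).deriv, ← hF t ht', ← hG t ht']

theorem ContinuousWithinAt.hasDerivWithinAt_sub_smul {𝕜 E : Type*} [NontriviallyNormedField 𝕜]
    [NormedAddCommGroup E] [NormedSpace 𝕜 E] {g : 𝕜 → E} {s : Set 𝕜} {x : 𝕜}
    (hg : ContinuousWithinAt g s x) :
    HasDerivWithinAt (fun y => (y - x) • g y) (g x) s x := by
  rw [hasDerivWithinAt_iff_tendsto_slope]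
  refine (hg.mono sdiff_subset).tendsto.congr' ?_
  filter_upwards [self_mem_nhdsWithin] with y hy
  rw [slope_def_module, sub_self, zero_smul, sub_zero, smul_smul,
    inv_mul_cancel₀ (sub_ne_zero.2 hy.2), one_smul]

theorem ContinuousLinearMap.continuousOn_intervalIntegral_apply₂ {X E F G : Type*}
    [TopologicalSpace X] [FirstCountableTopology X] [NormedAddCommGroup E] [NormedSpace ℝ E]
    [NormedAddCommGroup F] [NormedSpace ℝ F] [NormedAddCommGroup G] [NormedSpace ℝ G]
    (L : E →L[ℝ] F →L[ℝ] G) {g : ℝ → E} {h : X → ℝ → F} {K : Set X} {c d : ℝ}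
    (hK : IsCompact K) (hg : IntervalIntegrable g volume c d)
    (hh : ContinuousOn (fun p : X × ℝ => h p.1 p.2) (K ×ˢ uIcc c d)) :
    ContinuousOn (fun p => ∫ t in c..d, L (g t) (h p t)) K := by
  obtain ⟨M, hM⟩ := (hK.prod isCompact_uIcc).exists_bound_of_continuousOn hh
  have hh_t : ∀ p ∈ K, ContinuousOn (h p) (uIcc c d) := fun p hp =>
    hh.comp (continuousOn_const.prodMk continuousOn_id) fun t ht => mk_mem_prod hp ht
  have hh_p : ∀ t ∈ uIcc c d, ContinuousOn (fun p => h p t) K := fun t ht =>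
    hh.comp (continuousOn_id.prodMk continuousOn_const) fun p hp => mk_mem_prod hp ht
  intro p hp
  refine intervalIntegral.continuousWithinAt_of_dominated_interval
    (bound := fun t => ‖L‖ * ‖g t‖ * M) ?_ ?_ ?_ ?_
  · filter_upwards [self_mem_nhdsWithin] with q hq
    exact L.aestronglyMeasurable_comp₂ hg.def'.aestronglyMeasurable
      (((hh_t q hq).mono uIoc_subset_uIcc).aestronglyMeasurable measurableSet_uIoc)
  · filter_upwards [self_mem_nhdsWithin] with q hq
    refine ae_of_all _ fun t ht => (L.le_opNorm₂ _ _).trans ?_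
    gcongr
    exact hM (q, t) (mk_mem_prod hq (uIoc_subset_uIcc ht))
  · exact (hg.norm.const_mul _).mul_const _
  · exact ae_of_all _ fun t ht =>
      (L (g t)).continuous.continuousAt.comp_continuousWithinAt
        (hh_p t (uIoc_subset_uIcc ht) p hp)

theorem ContinuousOn.intervalIntegrable_vecMul {m n : Type*} [Fintype m] [Fintype n]
    {c d : ℝ} {v : ℝ → m → ℝ} {M : ℝ → Matrix m n ℝ} (hv : ContinuousOn v (uIcc c d))
    (hM : ∀ i j, IntervalIntegrable (fun t => M t i j) volume c d) :
    IntervalIntegrable (fun t => v t ᵥ* M t) volume c d := by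
  rw [intervalIntegrable_iff, IntegrableOn, integrable_pi_iff]
  intro j
  rw [← IntegrableOn, ← intervalIntegrable_iff]
  have hsum : IntervalIntegrable (∑ i, fun t => v t i * M t i j) volume c d :=
    IntervalIntegrable.sum _ fun i _ => (hM i j).continuousOn_mul (continuousOn_pi.1 hv i)
  convert hsum using 1
  ext t
  simp [vecMul, dotProduct]

theorem ip_eq_dotProduct (v w : Fin 2 → ℝ) : ip v w = v ⬝ᵥ w := by
  simp [ip, dotProduct, Fin.sum_univ_two]

theorem wronskian_deriv_eq_ip_of_dirac {A B : Matrix (Fin 2) (Fin 2) ℝ}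
    {v₁ v₂ w₁ w₂ : Fin 2 → ℝ} (hA : A.IsSymm) (h₁ : Jmat *ᵥ w₁ + A *ᵥ v₁ = 0)
    (h₂ : Jmat *ᵥ w₂ + B *ᵥ v₂ = 0) :
    (w₁ 0 * v₂ 1 + v₁ 0 * w₂ 1) - (w₁ 1 * v₂ 0 + v₁ 1 * w₂ 0) = ip v₁ ((B - A) *ᵥ v₂) := by
  have h₁₀ := congrFun h₁ 0
  have h₁₁ := congrFun h₁ 1
  have h₂₀ := congrFun h₂ 0
  have h₂₁ := congrFun h₂ 1
  simp only [Jmat, mulVec_fin_two, Pi.add_apply, Pi.zero_apply, of_apply, cons_val_zero,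
    cons_val_one, cons_val_fin_one] at h₁₀ h₁₁ h₂₀ h₂₁
  simp only [ip, mulVec, dotProduct, Fin.sum_univ_two, Matrix.sub_apply]
  linear_combination v₂ 1 * h₁₁ + v₂ 0 * h₁₀ - v₁ 0 * h₂₀ - v₁ 1 * h₂₁
    - (v₁ 0 * v₂ 1 - v₁ 1 * v₂ 0) * hA.apply 0 1

theorem IsDiracSolution.wronskian_sub_eq_integral {a b c x : ℝ}
    {A B : ℝ → Matrix (Fin 2) (Fin 2) ℝ} {u₁ u₂ : ℝ → Fin 2 → ℝ}
    (hA : ∀ t ∈ Icc a b, (A t).IsSymm) (h₁ : IsDiracSolution (Icc a b) A 0 u₁)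
    (h₂ : IsDiracSolution (Icc a b) B 0 u₂) (hc : c ∈ Icc a b) (hx : x ∈ Icc a b) :
    Wr u₁ u₂ x - Wr u₁ u₂ c = ∫ t in c..x, ip (u₁ t) ((B t - A t) *ᵥ u₂ t) := by
  obtain ⟨w₁, ⟨hu₁, hw₁⟩, heq₁⟩ := h₁
  obtain ⟨w₂, ⟨hu₂, hw₂⟩, heq₂⟩ := h₂
  have hsub : uIcc c x ⊆ Icc a b := uIcc_subset_Icc hc hx
  have hprod : ∀ i j, u₁ x i * u₂ x j - u₁ c i * u₂ c j =
      ∫ t in c..x, w₁ t i * u₂ t j + u₁ t i * w₂ t j := fun i j =>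
    mul_sub_mul_eq_intervalIntegral (hw₁ c hc x hx i).1 (hw₂ c hc x hx j).1
      (fun t ht => (hw₁ c hc t (hsub ht) i).2) (fun t ht => (hw₂ c hc t (hsub ht) j).2)
  have hint : ∀ i j, IntervalIntegrable (fun t => w₁ t i * u₂ t j + u₁ t i * w₂ t j)
      volume c x := fun i j =>
    ((hw₁ c hc x hx i).1.mul_continuousOn (continuousOn_pi.1 (hu₂.mono hsub) j)).add
      ((hw₂ c hc x hx j).1.continuousOn_mul (continuousOn_pi.1 (hu₁.mono hsub) i))
  calc Wr u₁ u₂ x - Wr u₁ u₂ c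
      = (u₁ x 0 * u₂ x 1 - u₁ c 0 * u₂ c 1) - (u₁ x 1 * u₂ x 0 - u₁ c 1 * u₂ c 0) := by
        simp only [Wr]; ring
    _ = ∫ t in c..x,
          (w₁ t 0 * u₂ t 1 + u₁ t 0 * w₂ t 1) - (w₁ t 1 * u₂ t 0 + u₁ t 1 * w₂ t 0) := by
        rw [hprod, hprod, intervalIntegral.integral_sub (hint 0 1) (hint 1 0)]
    _ = ∫ t in c..x, ip (u₁ t) ((B t - A t) *ᵥ u₂ t) := by
        refine intervalIntegral.integral_congr_ae ?_
        filter_upwards [heq₁, heq₂] with t ht₁ ht₂ ht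
        have ht' := hsub (uIoc_subset_uIcc ht)
        exact wronskian_deriv_eq_ip_of_dirac (hA t ht') (by simpa using ht₁ ht')
          (by simpa using ht₂ ht')

section Family

variable {a b : ℝ} {φ₀ φ₁ : ℝ → Matrix (Fin 2) (Fin 2) ℝ} {u : ℝ → ℝ → Fin 2 → ℝ}

theorem wronskian_eq_sub_mul_integral
    (hs₀ : ∀ x ∈ Icc a b, (φ₀ x).IsSymm) (hs₁ : ∀ x ∈ Icc a b, (φ₁ x).IsSymm)
    (hsol : ∀ ε ∈ Icc (0:ℝ) 1,
      IsDiracSolution (Icc a b) (fun x => φ₀ x + ε • (φ₁ x - φ₀ x)) 0 (u ε))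
    {ε δ c x : ℝ} (hε : ε ∈ Icc (0:ℝ) 1) (hδ : δ ∈ Icc (0:ℝ) 1) (hc : c ∈ Icc a b)
    (hx : x ∈ Icc a b) (hδc : u δ c = u ε c) :
    Wr (u ε) (u δ) x = (δ - ε) * ∫ t in c..x, ip (u ε t) ((φ₁ t - φ₀ t) *ᵥ u δ t) := by
  have hsymm : ∀ t ∈ Icc a b, (φ₀ t + ε • (φ₁ t - φ₀ t)).IsSymm := fun t ht =>
    (hs₀ t ht).add (((hs₁ t ht).sub (hs₀ t ht)).smul ε)
  have hWc : Wr (u ε) (u δ) c = 0 := by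
    simp only [Wr, hδc]
    ring
  rw [← sub_zero (Wr _ _ x), ← hWc,
    (hsol ε hε).wronskian_sub_eq_integral hsymm (hsol δ hδ) hc hx,
    ← intervalIntegral.integral_const_mul]
  congr 1
  ext t
  simp only [ip, mulVec, dotProduct, Fin.sum_univ_two, Matrix.add_apply, Matrix.sub_apply,
    Matrix.smul_apply, smul_eq_mul]
  ring

theorem continuousOn_intervalIntegral_ip_mulVec
    (hi₀ : ∀ i j : Fin 2, IntegrableOn (fun x => φ₀ x i j) (Icc a b) volume)
    (hi₁ : ∀ i j : Fin 2, IntegrableOn (fun x => φ₁ x i j) (Icc a b) volume)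
    (huc : ∀ i : Fin 2, ContinuousOn (fun p : ℝ × ℝ => u p.1 p.2 i) (Icc 0 1 ×ˢ Icc a b))
    {ε c x : ℝ} (hε : ε ∈ Icc (0:ℝ) 1) (hc : c ∈ Icc a b) (hx : x ∈ Icc a b) :
    ContinuousOn (fun δ => ∫ t in c..x, ip (u ε t) ((φ₁ t - φ₀ t) *ᵥ u δ t)) (Icc 0 1) := by
  have hsub : uIcc c x ⊆ Icc a b := uIcc_subset_Icc hc hx
  have hu : ContinuousOn (fun p : ℝ × ℝ => u p.1 p.2) (Icc 0 1 ×ˢ uIcc c x) :=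
    (continuousOn_pi.2 huc).mono (prod_mono subset_rfl hsub)
  have hg : IntervalIntegrable (fun t => u ε t ᵥ* (φ₁ t - φ₀ t)) volume c x :=
    ContinuousOn.intervalIntegrable_vecMul
      (hu.comp (continuousOn_const.prodMk continuousOn_id) fun t ht => mk_mem_prod hε ht)
      fun i j => ((hi₁ i j).sub (hi₀ i j)).mono_set hsub |>.intervalIntegrable
  simpa only [ip_eq_dotProduct, dotProduct_mulVec, LinearMap.toContinuousBilinearMap_apply,
    dotProductBilin_apply_apply] using
    (dotProductBilin ℝ ℝ).toContinuousBilinearMap.continuousOn_intervalIntegral_apply₂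
      isCompact_Icc hg hu

theorem wronskian_eps_deriv_eq_neg_integral
    (hs₀ : ∀ x ∈ Icc a b, (φ₀ x).IsSymm) (hs₁ : ∀ x ∈ Icc a b, (φ₁ x).IsSymm)
    (hi₀ : ∀ i j : Fin 2, IntegrableOn (fun x => φ₀ x i j) (Icc a b) volume)
    (hi₁ : ∀ i j : Fin 2, IntegrableOn (fun x => φ₁ x i j) (Icc a b) volume)
    {uε : ℝ → ℝ → Fin 2 → ℝ}
    (huc : ∀ i : Fin 2, ContinuousOn (fun p : ℝ × ℝ => u p.1 p.2 i) (Icc 0 1 ×ˢ Icc a b))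
    (hder : ∀ ε ∈ Icc (0:ℝ) 1, ∀ x ∈ Icc a b, ∀ i : Fin 2,
      HasDerivAt (fun e => u e x i) (uε ε x i) ε)
    (hsol : ∀ ε ∈ Icc (0:ℝ) 1,
      IsDiracSolution (Icc a b) (fun x => φ₀ x + ε • (φ₁ x - φ₀ x)) 0 (u ε))
    {ε c x : ℝ} (hε : ε ∈ Icc (0:ℝ) 1) (hc : c ∈ Icc a b) (hx : x ∈ Icc a b)
    (hbc : ∀ δ ∈ Icc (0:ℝ) 1, u δ c = u ε c) :
    Wr (u ε) (uε ε) x = -∫ t in c..x, ip (u ε t) ((φ₀ t - φ₁ t) *ᵥ u ε t) := by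
  set Φ := fun δ => ∫ t in c..x, ip (u ε t) ((φ₁ t - φ₀ t) *ᵥ u δ t)
  have hW : HasDerivWithinAt (fun δ => Wr (u ε) (u δ) x) (Wr (u ε) (uε ε) x) (Icc 0 1) ε :=
    (((hder ε hε x hx 1).const_mul (u ε x 0)).sub
      ((hder ε hε x hx 0).const_mul (u ε x 1))).hasDerivWithinAt
  have hΦ : HasDerivWithinAt (fun δ => (δ - ε) • Φ δ) (Φ ε) (Icc 0 1) ε :=
    (continuousOn_intervalIntegral_ip_mulVec hi₀ hi₁ huc hε hc hx ε
      hε).hasDerivWithinAt_sub_smul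
  have hW_eq : ∀ δ ∈ Icc (0:ℝ) 1, Wr (u ε) (u δ) x = (δ - ε) • Φ δ := fun δ hδ =>
    wronskian_eq_sub_mul_integral hs₀ hs₁ hsol hε hδ hc hx (hbc δ hδ)
  rw [(uniqueDiffOn_Icc zero_lt_one ε hε).eq_deriv _ hW (hΦ.congr_of_mem hW_eq hε),
    ← intervalIntegral.integral_neg]
  simp only [Φ, ← neg_sub (φ₁ _), neg_mulVec, ip_eq_dotProduct, dotProduct_neg, neg_neg]

end Family

theorem wronskian_of_eps_derivative_general
    (a b : ℝ)
    (φ₀ φ₁ : ℝ → Matrix (Fin 2) (Fin 2) ℝ)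
    (hs₀ : ∀ x ∈ Set.Icc a b, (φ₀ x).IsSymm) (hs₁ : ∀ x ∈ Set.Icc a b, (φ₁ x).IsSymm)
    (hi₀ : ∀ i j : Fin 2, IntegrableOn (fun x => φ₀ x i j) (Set.Icc a b) volume)
    (hi₁ : ∀ i j : Fin 2, IntegrableOn (fun x => φ₁ x i j) (Set.Icc a b) volume)
    (α β : ℝ)
    (u uε : ℝ → ℝ → Fin 2 → ℝ)
    -- joint continuity of `u` and of its `ε`-derivative `uε`
    (huc : ∀ i : Fin 2, ContinuousOn (fun p : ℝ × ℝ => u p.1 p.2 i)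
      (Set.Icc 0 1 ×ˢ Set.Icc a b))
    (hder : ∀ ε ∈ Set.Icc (0:ℝ) 1, ∀ x ∈ Set.Icc a b, ∀ i : Fin 2,
      HasDerivAt (fun e => u e x i) (uε ε x i) ε)
    (hsol : ∀ ε ∈ Set.Icc (0:ℝ) 1,
      IsDiracSolution (Set.Icc a b) (fun x => φ₀ x + ε • (φ₁ x - φ₀ x)) 0 (u ε)) :
    -- boundary condition at `b`
    ((∀ ε ∈ Set.Icc (0:ℝ) 1, u ε b = ![Real.sin β, Real.cos β]) →
      ∀ ε ∈ Set.Icc (0:ℝ) 1, ∀ x ∈ Set.Icc a b,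
        Wr (u ε) (uε ε) x = ∫ r in x..b, ip (u ε r) ((φ₀ r - φ₁ r).mulVec (u ε r))) ∧
    -- boundary condition at `a`
    ((∀ ε ∈ Set.Icc (0:ℝ) 1, u ε a = ![Real.sin α, Real.cos α]) →
      ∀ ε ∈ Set.Icc (0:ℝ) 1, ∀ x ∈ Set.Icc a b,
        Wr (u ε) (uε ε) x = -∫ r in a..x, ip (u ε r) ((φ₀ r - φ₁ r).mulVec (u ε r))) := by
  constructor
  · intro hb ε hε x hx
    have hbx : b ∈ Icc a b := right_mem_Icc.2 (hx.1.trans hx.2)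
    rw [intervalIntegral.integral_symm,
      wronskian_eps_deriv_eq_neg_integral hs₀ hs₁ hi₀ hi₁ huc hder hsol hε hbx hx
        fun δ hδ => by rw [hb δ hδ, hb ε hε]]
  · intro ha ε hε x hx
    have hax : a ∈ Icc a b := left_mem_Icc.2 (hx.1.trans hx.2)
    exact wronskian_eps_deriv_eq_neg_integral hs₀ hs₁ hi₀ hi₁ huc hder hsol hε hax hx
      fun δ hδ => by rw [ha δ hδ, ha ε hε]

theorem wronskian_of_eps_derivative
    (a b : ℝ) (hab : a < b)
    (φ₀ φ₁ : ℝ → Matrix (Fin 2) (Fin 2) ℝ)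
    (hs₀ : ∀ x ∈ Set.Icc a b, (φ₀ x).IsSymm) (hs₁ : ∀ x ∈ Set.Icc a b, (φ₁ x).IsSymm)
    (hi₀ : ∀ i j : Fin 2, IntegrableOn (fun x => φ₀ x i j) (Set.Icc a b) volume)
    (hi₁ : ∀ i j : Fin 2, IntegrableOn (fun x => φ₁ x i j) (Set.Icc a b) volume)
    (α β : ℝ)
    (u uε : ℝ → ℝ → Fin 2 → ℝ)
    -- joint continuity of `u` and of its `ε`-derivative `uε`
    (huc : ∀ i : Fin 2, ContinuousOn (fun p : ℝ × ℝ => u p.1 p.2 i)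
      (Set.Icc 0 1 ×ˢ Set.Icc a b))
    (huεc : ∀ i : Fin 2, ContinuousOn (fun p : ℝ × ℝ => uε p.1 p.2 i)
      (Set.Icc 0 1 ×ˢ Set.Icc a b))
    (hder : ∀ ε ∈ Set.Icc (0:ℝ) 1, ∀ x ∈ Set.Icc a b, ∀ i : Fin 2,
      HasDerivAt (fun e => u e x i) (uε ε x i) ε)
    (hsol : ∀ ε ∈ Set.Icc (0:ℝ) 1,
      IsDiracSolution (Set.Icc a b) (fun x => φ₀ x + ε • (φ₁ x - φ₀ x)) 0 (u ε)) :
    -- boundary condition at `b`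
    ((∀ ε ∈ Set.Icc (0:ℝ) 1, u ε b = ![Real.sin β, Real.cos β]) →
      ∀ ε ∈ Set.Icc (0:ℝ) 1, ∀ x ∈ Set.Icc a b,
        Wr (u ε) (uε ε) x = ∫ r in x..b, ip (u ε r) ((φ₀ r - φ₁ r).mulVec (u ε r))) ∧
    -- boundary condition at `a`
    ((∀ ε ∈ Set.Icc (0:ℝ) 1, u ε a = ![Real.sin α, Real.cos α]) →
      ∀ ε ∈ Set.Icc (0:ℝ) 1, ∀ x ∈ Set.Icc a b,
        Wr (u ε) (uε ε) x = -∫ r in a..x, ip (u ε r) ((φ₀ r - φ₁ r).mulVec (u ε r))) :=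
  wronskian_of_eps_derivative_general a b φ₀ φ₁ hs₀ hs₁ hi₀ hi₁ α β u uε huc hder hsol
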